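/- arXiv:1507.01110 — 2 statements merged into one kernel-verified Lean document; each statement's English description precedes it below -/
import Mathlib

section
/- Let (F, ξ, η) be an almost contact structure on a real vector space V and let g* be any positive definite symmetric bilinear form on V. Define g(u,v) = (1/2)[g'(F(u),F(v)) + g'(u,v) + η(u)η(v)] where g'(u,v) = g*(F²(u), F²(v)) + η(u)η(v). Then g is a positive definite symmetric bilinear form on V satisfying the compatibility condition g(F(u),F(v)) = g(u,v) - η(u)η(v) for all u,v ∈ V. -/
/-- Construction of a compatible metric on an almost contact real vector space from an
arbitrary positive definite symmetric bilinear form `g*`. -/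
theorem almost_contact_compatible_metric_exists {V : Type*} [AddCommGroup V] [Module ℝ V]
    (F : V →ₗ[ℝ] V) (ξ : V) (η : V →ₗ[ℝ] ℝ) (gstar : V →ₗ[ℝ] V →ₗ[ℝ] ℝ)
    (hF2 : ∀ v : V, F (F v) = -v + η v • ξ) (hη : η ξ = 1)
    (hsymm : ∀ u v : V, gstar u v = gstar v u)
    (hpos : ∀ v : V, v ≠ 0 → 0 < gstar v v)
    (g' g : V → V → ℝ)
    (hg' : ∀ u v : V, g' u v = gstar (F (F u)) (F (F v)) + η u * η v)
    (hg : ∀ u v : V, g u v = (1 / 2) * (g' (F u) (F v) + g' u v + η u * η v)) :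
    (∀ (a : ℝ) (u u' v : V), g (a • u + u') v = a * g u v + g u' v) ∧
    (∀ (a : ℝ) (u v v' : V), g u (a • v + v') = a * g u v + g u v') ∧
    (∀ u v : V, g u v = g v u) ∧
    (∀ v : V, v ≠ 0 → 0 < g v v) ∧
    (∀ u v : V, g (F u) (F v) = g u v - η u * η v) := by
  have hξ0 : ξ ≠ 0 := by
    intro h; rw [h, map_zero] at hη; norm_num at hη
  have h1 : F (F ξ) = 0 := by rw [hF2, hη, one_smul]; abel
  have h2 : F ξ = η (F ξ) • ξ := by
    have h3 := hF2 (F ξ)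
    have h4 : F (F (F ξ)) = 0 := by rw [h1, map_zero]
    rw [h4] at h3
    have := h3.symm
    linear_combination (norm := module) -this
  have hηFξ : η (F ξ) = 0 := by
    have h5 : (η (F ξ) * η (F ξ)) • ξ = 0 := by
      rw [← smul_smul, ← h2, ← map_smul, ← h2, h1]
    have := smul_eq_zero.mp h5
    rcases this with h | h
    · exact pow_eq_zero_iff (n := 2) (by norm_num) |>.mp (by rw [sq]; exact h) 
    · exact absurd h hξ0
  have hFξ : F ξ = 0 := by rw [h2, hηFξ, zero_smul]
  have hηF : ∀ v : V, η (F v) = 0 := by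
    intro v
    have h3 := hF2 (F v)
    have h4 : F (F (F v)) = -(F v) := by
      rw [hF2 v, map_add, map_neg, map_smul, hFξ, smul_zero, add_zero]
    rw [h4] at h3
    have h5 : η (F v) • ξ = 0 := add_eq_left.mp h3.symm
    rcases smul_eq_zero.mp h5 with h | h
    · exact h
    · exact absurd h hξ0
  -- the key simplified formula for g
  have hgf : ∀ u v : V, g u v =
      (1 / 2) * (gstar (F u) (F v) + gstar (F (F u)) (F (F v))) + η u * η v := by
    intro u v
    have h3 : F (F (F u)) = -(F u) := by
      rw [hF2 u, map_add, map_neg, map_smul, hFξ, smul_zero, add_zero]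
    have h4 : F (F (F v)) = -(F v) := by
      rw [hF2 v, map_add, map_neg, map_smul, hFξ, smul_zero, add_zero]
    rw [hg, hg', hg', h3, h4, hηF, hηF, map_neg, map_neg, LinearMap.neg_apply, neg_neg]
    ring
  have hnn : ∀ w : V, 0 ≤ gstar w w := by
    intro w
    rcases eq_or_ne w 0 with h | h
    · simp [h]
    · exact (hpos w h).le
  refine ⟨?_, ?_, ?_, ?_, ?_⟩
  · intro a u u' v
    simp only [hgf, map_add, map_smul, LinearMap.add_apply, LinearMap.smul_apply,
      smul_eq_mul]
    ring
  · intro a u v v'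
    simp only [hgf, map_add, map_smul, smul_eq_mul]
    ring
  · intro u v
    rw [hgf, hgf, hsymm (F u) (F v), hsymm (F (F u)) (F (F v))]
    ring
  · intro v hv
    have hA := hnn (F v)
    have hB := hnn (F (F v))
    rw [hgf]
    rcases eq_or_ne (η v) 0 with h | h
    · have hFv : F (F v) = -v := by rw [hF2, h, zero_smul, add_zero]
      have : (0:ℝ) < gstar (F (F v)) (F (F v)) := by
        apply hpos
        rw [hFv]; simpa using hv
      nlinarith
    · nlinarith [mul_self_pos.mpr h]
  · intro u v
    have h3 : F (F (F u)) = -(F u) := by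
      rw [hF2 u, map_add, map_neg, map_smul, hFξ, smul_zero, add_zero]
    have h4 : F (F (F v)) = -(F v) := by
      rw [hF2 v, map_add, map_neg, map_smul, hFξ, smul_zero, add_zero]
    rw [hgf, hgf, h3, h4, hηF, hηF, map_neg, map_neg, LinearMap.neg_apply, neg_neg]
    ring
end

section
/- Let (F₁, ξ₁, η₁) and (F₂, ξ₂, η₂) be almost contact structures on real vector spaces V₁ and V₂. Define on V₁ × V₂ the endomorphism J(v₁, v₂) = (F₁(v₁) - η₂(v₂)ξ₁, F₂(v₂) + η₁(v₁)ξ₂). Then J² = -id, i.e. J is a complex structure on V₁ × V₂. -/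
/-- The product of two almost contact structures is an almost complex structure. -/
theorem product_almost_contact_is_complex {V₁ V₂ : Type*}
    [AddCommGroup V₁] [Module ℝ V₁] [AddCommGroup V₂] [Module ℝ V₂]
    (F₁ : V₁ →ₗ[ℝ] V₁) (ξ₁ : V₁) (η₁ : V₁ →ₗ[ℝ] ℝ)
    (F₂ : V₂ →ₗ[ℝ] V₂) (ξ₂ : V₂) (η₂ : V₂ →ₗ[ℝ] ℝ)
    (hF₁ : ∀ v : V₁, F₁ (F₁ v) = -v + η₁ v • ξ₁) (hη₁ : η₁ ξ₁ = 1)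
    (hF₂ : ∀ v : V₂, F₂ (F₂ v) = -v + η₂ v • ξ₂) (hη₂ : η₂ ξ₂ = 1)
    (hF₁ξ : F₁ ξ₁ = 0) (hF₂ξ : F₂ ξ₂ = 0)
    (hηF₁ : ∀ v : V₁, η₁ (F₁ v) = 0) (hηF₂ : ∀ v : V₂, η₂ (F₂ v) = 0)
    (J : V₁ × V₂ →ₗ[ℝ] V₁ × V₂)
    (hJ : ∀ p : V₁ × V₂, J p = (F₁ p.1 - η₂ p.2 • ξ₁, F₂ p.2 + η₁ p.1 • ξ₂)) :
    ∀ p : V₁ × V₂, J (J p) = -p := by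
  intro p
  rw [hJ, hJ]
  simp only [map_sub, map_add, map_smul, hF₁ p.1, hF₂ p.2, hF₁ξ, hF₂ξ,
    hηF₁, hηF₂, hη₁, hη₂, smul_zero, smul_eq_mul, mul_one]
  ext <;> simp <;> abel
end
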